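/- arXiv:1807.08604 — 4 statements merged into one kernel-verified Lean document; each statement's English description precedes it below -/
import Mathlib

section
/- Let p, q be real polynomials of the same degree m with equal nonzero leading coefficients, and f = p/q. Then the limit lim_{s→∞} (1/2)·s·ln|f(s)| exists (along real s → +∞) and equals (1/2)·(p_{m-1}/p_m − q_{m-1}/q_m). -/
/-!
Write `f = p / q`. Since `p` and `q` have the same degree and leading coefficient, `p - q` has
degree below `m`, so `s (f(s) - 1) = s (p - q)(s) / q(s)` is a ratio of polynomials of degree at
most `m` and tends to `(p_{m-1} - q_{m-1}) / p_m`. The bounds `1 - 1/y ≤ log y ≤ y - 1` squeeze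
`s log f(s)` between `s (f(s) - 1) / f(s)` and `s (f(s) - 1)`, which have that same limit.
-/

open Filter Polynomial Topology

namespace Polynomial

theorem degree_X_mul_le_of_degree_lt {R : Type*} [Semiring R] {P Q : R[X]}
    (hdeg : P.degree < Q.degree) : (X * P).degree ≤ Q.degree :=
  calc (X * P).degree ≤ 1 + P.degree := (degree_mul_le X P).trans (add_le_add_left degree_X_le _)
    _ = P.degree + 1 := add_comm _ _
    _ ≤ Q.degree := Nat.WithBot.add_one_le_of_lt hdeg

variable {𝕜 : Type*} [NormedField 𝕜] [LinearOrder 𝕜] [IsStrictOrderedRing 𝕜] [OrderTopology 𝕜]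
  {P Q : 𝕜[X]}

theorem div_tendsto_atTop_coeff_natDegree_div_leadingCoeff (hQ : Q ≠ 0)
    (hdeg : P.degree ≤ Q.degree) :
    Tendsto (fun x => eval x P / eval x Q) atTop (𝓝 (P.coeff Q.natDegree / Q.leadingCoeff)) := by
  rcases hdeg.lt_or_eq with hlt | heq
  · rw [coeff_eq_zero_of_degree_lt (degree_eq_natDegree hQ ▸ hlt), zero_div]
    exact div_tendsto_atTop_zero_of_degree_lt P Q hlt
  · rw [← natDegree_eq_natDegree heq]
    exact div_tendsto_atTop_leadingCoeff_div_of_degree_eq P Q heq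

theorem tendsto_mul_eval_div_eval_sub_one (hQ : Q ≠ 0) (hdeg : (P - Q).degree < Q.degree) :
    Tendsto (fun x => x * (eval x P / eval x Q - 1)) atTop
      (𝓝 ((P - Q).coeff (Q.natDegree - 1) / Q.leadingCoeff)) := by
  have hcoeff : (X * (P - Q)).coeff Q.natDegree = (P - Q).coeff (Q.natDegree - 1) := by
    rcases Nat.eq_zero_or_eq_succ_pred Q.natDegree with h0 | hsucc
    · rw [h0, coeff_X_mul_zero, coeff_eq_zero_of_degree_lt]
      rwa [degree_eq_natDegree hQ, h0] at hdeg
    · rw [hsucc, coeff_X_mul, Nat.succ_sub_one]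
  rw [← hcoeff]
  refine (div_tendsto_atTop_coeff_natDegree_div_leadingCoeff hQ
    (degree_X_mul_le_of_degree_lt hdeg)).congr' ?_
  filter_upwards [Q.eventually_atTop_not_isRoot hQ] with x hx
  rw [eval_mul, eval_X, eval_sub, mul_div_assoc, sub_div, div_self hx]

end Polynomial

theorem tendsto_mul_log_of_tendsto_mul_sub_one {g : ℝ → ℝ} {A : ℝ}
    (h : Tendsto (fun s => s * (g s - 1)) atTop (𝓝 A)) :
    Tendsto (fun s => s * Real.log (g s)) atTop (𝓝 A) := by
  have hg : Tendsto g atTop (𝓝 1) := by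
    have := (h.mul tendsto_inv_atTop_zero).const_add 1
    rw [mul_zero, add_zero] at this
    refine this.congr' ?_
    filter_upwards [eventually_ne_atTop 0] with s hs
    field_simp
    ring
  have hlower : Tendsto (fun s => s * (g s - 1) / g s) atTop (𝓝 A) := by
    rw [← div_one A]
    exact h.div hg one_ne_zero
  have hpos : ∀ᶠ s in atTop, 0 ≤ s ∧ 0 < g s :=
    (eventually_ge_atTop 0).and (hg.eventually (eventually_gt_nhds one_pos))
  refine tendsto_of_tendsto_of_tendsto_of_le_of_le' hlower h ?_ ?_
  · filter_upwards [hpos] with s ⟨hs, hgs⟩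
    calc s * (g s - 1) / g s = s * (1 - (g s)⁻¹) := by field_simp
      _ ≤ s * Real.log (g s) := mul_le_mul_of_nonneg_left (Real.one_sub_inv_le_log_of_pos hgs) hs
  · filter_upwards [hpos] with s ⟨hs, hgs⟩
    exact mul_le_mul_of_nonneg_left (Real.log_le_sub_one_of_pos hgs) hs

theorem stmt1 (m : ℕ) (p q : Polynomial ℝ)
    (hp : p.natDegree = m) (hq : q.natDegree = m)
    (hlead : p.coeff m = q.coeff m) (hne : p.coeff m ≠ 0) :
    Tendsto (fun s : ℝ => (1 / 2) * s * Real.log |p.eval s / q.eval s|) atTop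
      (nhds ((1 / 2) * (p.coeff (m - 1) / p.coeff m - q.coeff (m - 1) / q.coeff m))) := by
  have hp0 : p ≠ 0 := by
    rintro rfl
    exact hne (coeff_zero m)
  have hq0 : q ≠ 0 := by
    rintro rfl
    exact hne (hlead.trans (coeff_zero m))
  have hdeg : (p - q).degree < q.degree := by
    refine degree_sub_lt_right ?_ hq0 ?_
    · rw [degree_eq_natDegree hp0, degree_eq_natDegree hq0, hp, hq]
    · rw [leadingCoeff, leadingCoeff, hp, hq, hlead]
  have hlim := (tendsto_mul_log_of_tendsto_mul_sub_one
    (tendsto_mul_eval_div_eval_sub_one hq0 hdeg)).const_mul (1 / 2)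
  rw [coeff_sub, leadingCoeff, hq, sub_div] at hlim
  simpa only [Real.log_abs, mul_assoc, hlead] using hlim
end

section
/- For real numbers a > 0 and c ≥ 0, the integral over ω ∈ ℝ of ln(1 + c/(ω² + a²)) dω equals 2π(√(a² + c) − a). -/
open Real MeasureTheory
open Set Filter Topology

/-!
Put `b = √(a² + c)`. Then `log (1 + c / (x² + a²)) = log (x² + b²) - log (x² + a²)`, and
`x log (x² + b²) - 2x + 2b arctan (x / b)` is an antiderivative of `log (x² + b²)`. The integrand is
even and nonnegative, so the integral is twice the limit at `+∞` of the resulting antiderivative;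
since `x log (1 + c / (x² + a²)) ≤ c / x` and `arctan → π / 2`, that limit is `π (b - a)`.
-/

theorem hasDerivAt_mul_log_sq_add_sq {b : ℝ} (hb : b ≠ 0) (x : ℝ) :
    HasDerivAt (fun x => x * log (x ^ 2 + b ^ 2) - 2 * x + 2 * b * arctan (x / b))
      (log (x ^ 2 + b ^ 2)) x := by
  have hpos : 0 < x ^ 2 + b ^ 2 := by positivity
  have hlog : HasDerivAt (fun x => log (x ^ 2 + b ^ 2)) (2 * x / (x ^ 2 + b ^ 2)) x := by
    simpa using ((hasDerivAt_pow 2 x).add_const (b ^ 2)).log hpos.ne'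
  have harctan : HasDerivAt (fun x => arctan (x / b)) (1 / (1 + (x / b) ^ 2) * (1 / b)) x :=
    (hasDerivAt_arctan (x / b)).comp (h₂ := arctan) x ((hasDerivAt_id x).div_const b)
  refine ((((hasDerivAt_id' x).mul hlog).sub ((hasDerivAt_id' x).const_mul 2)).add
    (harctan.const_mul (2 * b))).congr_deriv ?_
  field_simp
  ring

theorem log_one_add_div_eq_log_sub_log {y c : ℝ} (hy : 0 < y) (hyc : 0 < y + c) :
    log (1 + c / y) = log (y + c) - log y := by
  rw [← log_div hyc.ne' hy.ne', add_div, div_self hy.ne']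

theorem tendsto_arctan_div_atTop {d : ℝ} (hd : 0 < d) :
    Tendsto (fun x => arctan (x / d)) atTop (𝓝 (π / 2)) :=
  (tendsto_nhds_of_tendsto_nhdsWithin tendsto_arctan_atTop).comp
    (tendsto_id.atTop_div_const hd)

theorem tendsto_mul_log_one_add_div_sq_add_sq (a : ℝ) {c : ℝ} (hc : 0 ≤ c) :
    Tendsto (fun x => x * log (1 + c / (x ^ 2 + a ^ 2))) atTop (𝓝 0) := by
  refine tendsto_of_tendsto_of_tendsto_of_le_of_le' tendsto_const_nhds
    ((tendsto_const_nhds (x := c)).div_atTop tendsto_id) ?_ ?_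
  all_goals filter_upwards [eventually_gt_atTop 0] with x hx
  · exact mul_nonneg hx.le (log_nonneg (le_add_of_nonneg_right (by positivity)))
  · calc x * log (1 + c / (x ^ 2 + a ^ 2)) ≤ x * (c / (x ^ 2 + a ^ 2)) := by
          gcongr
          linarith [log_le_sub_one_of_pos (x := 1 + c / (x ^ 2 + a ^ 2)) (by positivity)]
      _ ≤ c / x := by
          rw [mul_div_assoc', div_le_div_iff₀ (by positivity) hx]
          nlinarith [mul_nonneg (mul_nonneg hc hx.le) hx.le, sq_nonneg a]

theorem integral_Ioi_log_one_add_div_sq_add_sq {a c : ℝ} (ha : 0 < a) (hc : 0 ≤ c) :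
    ∫ x in Ioi 0, log (1 + c / (x ^ 2 + a ^ 2)) = π * (√(a ^ 2 + c) - a) := by
  set b := √(a ^ 2 + c)
  have hb : 0 < b := sqrt_pos.2 (by positivity)
  have hb2 : b ^ 2 = a ^ 2 + c := sq_sqrt (by positivity)
  have hlog (x : ℝ) : log (1 + c / (x ^ 2 + a ^ 2)) = log (x ^ 2 + b ^ 2) - log (x ^ 2 + a ^ 2) := by
    rw [log_one_add_div_eq_log_sub_log (by positivity) (by positivity), hb2, add_assoc]
  -- The `-2x` terms of the two antiderivatives cancel.
  let G x := x * log (1 + c / (x ^ 2 + a ^ 2)) + 2 * b * arctan (x / b) - 2 * a * arctan (x / a)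
  have hG (x : ℝ) : HasDerivAt G (log (1 + c / (x ^ 2 + a ^ 2))) x := by
    have hG_eq : G = (fun x => x * log (x ^ 2 + b ^ 2) - 2 * x + 2 * b * arctan (x / b)) -
        fun x => x * log (x ^ 2 + a ^ 2) - 2 * x + 2 * a * arctan (x / a) := by
      ext y
      simp only [G, Pi.sub_apply, hlog]
      ring
    rw [hG_eq, hlog]
    exact (hasDerivAt_mul_log_sq_add_sq hb.ne' x).sub (hasDerivAt_mul_log_sq_add_sq ha.ne' x)
  have hG_top : Tendsto G atTop (𝓝 (π * b - π * a)) := by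
    convert ((tendsto_mul_log_one_add_div_sq_add_sq a hc).add
      ((tendsto_arctan_div_atTop hb).const_mul (2 * b))).sub
      ((tendsto_arctan_div_atTop ha).const_mul (2 * a)) using 2
    ring
  rw [integral_Ioi_of_hasDerivAt_of_nonneg' (fun x _ => hG x)
    (fun x _ => log_nonneg (le_add_of_nonneg_right (by positivity))) hG_top]
  simp only [G, zero_mul, zero_div, arctan_zero, mul_zero, add_zero, sub_zero]
  ring

theorem stmt5 (a c : ℝ) (ha : 0 < a) (hc : 0 ≤ c) :
    ∫ ω : ℝ, Real.log (1 + c / (ω ^ 2 + a ^ 2)) = 2 * π * (Real.sqrt (a ^ 2 + c) - a) := by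
  conv_lhs => enter [2, ω]; rw [← sq_abs ω]
  rw [integral_comp_abs (f := fun x => log (1 + c / (x ^ 2 + a ^ 2))),
    integral_Ioi_log_one_add_div_sq_add_sq ha hc]
  ring
end

section
/- Let A ∈ ℝ^{m×m}, C ∈ ℝ^{l×m}, W ∈ ℝ^{m×m}, V ∈ ℝ^{l×l} invertible, and let P ∈ ℝ^{m×m} be symmetric satisfying the algebraic Riccati equation AP + PAᵀ + W − PCᵀV⁻¹CP = 0. Set K = PCᵀV⁻¹. Then for every complex s such that sI − A and −sI − A are invertible, the spectral factorization identity holds: [I + C(sI − A)⁻¹K]·V·[I + C(−sI − A)⁻¹K]ᵀ = C(sI − A)⁻¹W(−sI − A)⁻ᵀCᵀ + V. -/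
/-!
With `K = P Cᵀ V⁻¹` one has `K V = P Cᵀ` and `V Kᵀ = C P`, and since `(sI - A) P + P (-sI - A)ᵀ =
-(A P + P Aᵀ)`, the Riccati equation reads `W = K V Kᵀ + (sI - A) P + P (-sI - A)ᵀ`. Sandwiched
between `C (sI - A)⁻¹` and `(-sI - A)⁻ᵀ Cᵀ`, the last two summands collapse to `C (sI - A)⁻¹ K V` and
`V Kᵀ (-sI - A)⁻ᵀ Cᵀ`, the cross terms of the product on the left. This is an identity over any
commutative ring; the real hypotheses are carried to `ℂ` by `Matrix.map`.
-/

open Matrix Complex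

namespace Matrix

variable {R : Type*} [CommRing R] {n k : Type*} [Fintype n] [Fintype k] [DecidableEq k]

theorem factor_mul_transpose_factor_eq [DecidableEq n] {S T W P : Matrix n n R} {C : Matrix k n R}
    {V : Matrix k k R} {K : Matrix n k R} (hS : IsUnit S) (hT : IsUnit T)
    (hKV : K * V = P * Cᵀ) (hVK : V * Kᵀ = C * P) (hW : W = K * V * Kᵀ + S * P + P * Tᵀ) :
    (1 + C * S⁻¹ * K) * V * (1 + C * T⁻¹ * K)ᵀ = C * S⁻¹ * W * (T⁻¹)ᵀ * Cᵀ + V := by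
  have hSS : S⁻¹ * S = 1 := nonsing_inv_mul S ((isUnit_iff_isUnit_det S).mp hS)
  have hTT : Tᵀ * (T⁻¹)ᵀ = 1 := by
    rw [← transpose_mul, nonsing_inv_mul T ((isUnit_iff_isUnit_det T).mp hT), transpose_one]
  have hSP : C * S⁻¹ * (S * P) * (T⁻¹)ᵀ * Cᵀ = V * Kᵀ * (T⁻¹)ᵀ * Cᵀ := by
    rw [hVK, ← Matrix.mul_assoc (C * S⁻¹), Matrix.mul_assoc C, hSS, Matrix.mul_one]
  have hPT : C * S⁻¹ * (P * Tᵀ) * (T⁻¹)ᵀ * Cᵀ = C * S⁻¹ * K * V := by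
    rw [Matrix.mul_assoc (C * S⁻¹) K, hKV, ← Matrix.mul_assoc (C * S⁻¹) P,
      Matrix.mul_assoc _ Tᵀ, hTT, Matrix.mul_one, Matrix.mul_assoc]
  conv_rhs => rw [hW, Matrix.mul_add, Matrix.mul_add, Matrix.add_mul, Matrix.add_mul,
    Matrix.add_mul, Matrix.add_mul, hSP, hPT]
  rw [transpose_add, transpose_one, transpose_mul, transpose_mul]
  simp only [Matrix.add_mul, Matrix.mul_add, Matrix.one_mul, Matrix.mul_one, Matrix.mul_assoc]
  abel

theorem smul_one_sub_mul_add_mul_transpose [DecidableEq n] (A P : Matrix n n R) (s : R) :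
    (s • 1 - A) * P + P * (-(s • 1) - A)ᵀ = -(A * P) - P * Aᵀ := by
  simp only [transpose_sub, transpose_neg, transpose_smul, transpose_one, Matrix.sub_mul,
    Matrix.mul_sub, Matrix.smul_mul, Matrix.mul_smul, Matrix.one_mul, Matrix.mul_one,
    Matrix.mul_neg]
  abel

theorem resolvent_factor_mul_transpose_factor_eq [DecidableEq n] {A W P : Matrix n n R}
    {C : Matrix k n R} {V : Matrix k k R} {K : Matrix n k R} {s : R} (h1 : IsUnit (s • 1 - A))
    (h2 : IsUnit (-(s • 1) - A)) (hKV : K * V = P * Cᵀ) (hVK : V * Kᵀ = C * P)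
    (hW : W = K * V * Kᵀ - A * P - P * Aᵀ) :
    (1 + C * (s • 1 - A)⁻¹ * K) * V * (1 + C * (-(s • 1) - A)⁻¹ * K)ᵀ =
      C * (s • 1 - A)⁻¹ * W * ((-(s • 1) - A)⁻¹)ᵀ * Cᵀ + V := by
  refine factor_mul_transpose_factor_eq h1 h2 hKV hVK ?_
  rw [add_assoc, smul_one_sub_mul_add_mul_transpose, hW]
  abel

variable {P : Matrix n n R} {C : Matrix k n R} {V : Matrix k k R}

theorem mul_transpose_mul_inv_mul (hV : IsUnit V) : P * Cᵀ * V⁻¹ * V = P * Cᵀ := by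
  rw [Matrix.mul_assoc, nonsing_inv_mul V ((isUnit_iff_isUnit_det V).mp hV), Matrix.mul_one]

theorem mul_transpose_mul_transpose_mul_inv (hV : IsUnit V) (hVs : V.IsSymm) (hP : P.IsSymm) :
    V * (P * Cᵀ * V⁻¹)ᵀ = C * P := by
  rw [transpose_mul, transpose_mul, transpose_nonsing_inv, hVs.eq, transpose_transpose, hP.eq,
    ← Matrix.mul_assoc, ← Matrix.mul_assoc, mul_nonsing_inv V ((isUnit_iff_isUnit_det V).mp hV),
    Matrix.one_mul]

theorem eq_sub_of_riccati {A W : Matrix n n R} (hV : IsUnit V) (hVs : V.IsSymm) (hP : P.IsSymm)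
    (hare : A * P + P * Aᵀ + W - P * Cᵀ * V⁻¹ * C * P = 0) :
    W = P * Cᵀ * V⁻¹ * V * (P * Cᵀ * V⁻¹)ᵀ - A * P - P * Aᵀ := by
  rw [Matrix.mul_assoc _ V, mul_transpose_mul_transpose_mul_inv hV hVs hP, ← Matrix.mul_assoc,
    ← sub_eq_zero.mp hare]
  abel

theorem map_ofReal_mul {p q r : Type*} [Fintype q] (X : Matrix p q ℝ) (Y : Matrix q r ℝ) :
    (X * Y).map ofReal = X.map ofReal * Y.map ofReal :=
  Matrix.map_mul (f := ofRealHom)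

end Matrix

theorem stmt9 (m l : ℕ) (A W P : Matrix (Fin m) (Fin m) ℝ)
    (C : Matrix (Fin l) (Fin m) ℝ) (V : Matrix (Fin l) (Fin l) ℝ)
    (hV : V.IsSymm) (hVinv : IsUnit V) (hP : P.IsSymm)
    (hare : A * P + P * Aᵀ + W - P * Cᵀ * V⁻¹ * C * P = 0)
    (s : ℂ)
    (h1 : IsUnit (s • (1 : Matrix (Fin m) (Fin m) ℂ) - A.map (Complex.ofReal)))
    (h2 : IsUnit (-(s • (1 : Matrix (Fin m) (Fin m) ℂ)) - A.map (Complex.ofReal))) :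
    letI Ac := A.map (Complex.ofReal)
    letI Cc := C.map (Complex.ofReal)
    letI Wc := W.map (Complex.ofReal)
    letI Vc := V.map (Complex.ofReal)
    letI Kc := (P * Cᵀ * V⁻¹).map (Complex.ofReal)
    (1 + Cc * (s • (1 : Matrix (Fin m) (Fin m) ℂ) - Ac)⁻¹ * Kc) * Vc *
        (1 + Cc * (-(s • (1 : Matrix (Fin m) (Fin m) ℂ)) - Ac)⁻¹ * Kc)ᵀ =
      Cc * (s • (1 : Matrix (Fin m) (Fin m) ℂ) - Ac)⁻¹ * Wc *
        ((-(s • (1 : Matrix (Fin m) (Fin m) ℂ)) - Ac)⁻¹)ᵀ * Ccᵀ + Vc := by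
  have hKV := mul_transpose_mul_inv_mul (C := C) (P := P) hVinv
  have hVK := mul_transpose_mul_transpose_mul_inv (C := C) hVinv hV hP
  have hW := eq_sub_of_riccati hVinv hV hP hare
  -- so that `map_ofReal_mul` leaves `Kc` whole
  generalize P * Cᵀ * V⁻¹ = K at hKV hVK hW ⊢
  replace hKV := congrArg (·.map ofReal) hKV
  replace hVK := congrArg (·.map ofReal) hVK
  replace hW := congrArg (·.map ofReal) hW
  simp only [map_ofReal_mul, Matrix.map_sub _ ofReal_sub, transpose_map] at hKV hVK hW
  exact resolvent_factor_mul_transpose_factor_eq h1 h2 hKV hVK hW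
end

section
/- Let A ∈ ℝ^{m×m}, C ∈ ℝ^{l×m}, K ∈ ℝ^{m×l}. Then lim_{s→∞} s·ln|det(I + C(sI − A)⁻¹K)| = tr(CK), with the limit along real s → +∞. -/
/-!
By Sylvester's identity `det (1 + X Y) = det (1 + Y X)`, the determinant equals
`det (s - A + K C) / det (s - A)`. Putting `t = 1 / s` and scaling out `s`, it becomes
`f t = det (1 + t (K C - A)) / det (1 - t A)`, a ratio of polynomials in `t` with `f 0 = 1`.
Since `det (1 + t M) = 1 + t tr M + O(t²)`, the derivative of `f` at `0` is
`tr (K C - A) - tr (-A) = tr (C K)`, and `s log (f (1 / s))` tends to the derivative of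
`log ∘ f` at `0`, which is the same number.
-/

open Matrix Filter Topology

namespace Matrix

variable {n : Type*} [Fintype n] [DecidableEq n]

open Polynomial in
theorem hasDerivAt_det_one_add_smul {𝕜 : Type*} [NontriviallyNormedField 𝕜]
    (M : Matrix n n 𝕜) : HasDerivAt (fun t : 𝕜 => (1 + t • M).det) M.trace 0 := by
  have h := (det (1 + (X : 𝕜[X]) • M.map C)).hasDerivAt 0
  rw [derivative_det_one_add_X_smul] at h
  convert h using 2 with t
  rw [eval_det]
  congr 1
  ext i j
  by_cases hij : i = j <;> simp [hij, mul_comm]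

theorem det_one_add_mul_inv_mul {l K : Type*} [Fintype l] [DecidableEq l] [Field K]
    (C : Matrix l n K) (X : Matrix n n K) (B : Matrix n l K) (hX : X.det ≠ 0) :
    (1 + C * X⁻¹ * B).det = (X + B * C).det / X.det := by
  rw [Matrix.mul_assoc, det_one_add_mul_comm, Matrix.mul_assoc, ← X.nonsing_inv_mul hX.isUnit,
    ← Matrix.mul_add, det_mul, det_nonsing_inv, Ring.inverse_eq_inv', div_eq_inv_mul]

theorem det_one_add_mul_smul_one_sub_inv_mul {l K : Type*} [Fintype l] [DecidableEq l] [Field K]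
    (A : Matrix n n K) (C : Matrix l n K) (B : Matrix n l K) {s : K} (hs : s ≠ 0)
    (hA : (1 + s⁻¹ • -A).det ≠ 0) :
    (1 + C * (s • 1 - A)⁻¹ * B).det = (1 + s⁻¹ • (B * C - A)).det / (1 + s⁻¹ • -A).det := by
  have hscale : ∀ M : Matrix n n K, s • 1 + M = s • (1 + s⁻¹ • M) := fun M => by
    rw [smul_add, smul_smul, mul_inv_cancel₀ hs, one_smul]
  have hpow : s ^ Fintype.card n ≠ 0 := pow_ne_zero _ hs
  have hdet : (s • 1 + -A).det ≠ 0 := by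
    rw [hscale, det_smul]
    exact mul_ne_zero hpow hA
  rw [sub_eq_add_neg, det_one_add_mul_inv_mul _ _ _ hdet, add_assoc, ← sub_eq_neg_add,
    sub_eq_add_neg, hscale, hscale, det_smul, det_smul, mul_div_mul_left _ _ hpow]

end Matrix

theorem tendsto_mul_log_inv_atTop {f : ℝ → ℝ} {f' : ℝ} (hf : HasDerivAt f f' 0) (h0 : f 0 = 1) :
    Tendsto (fun s => s * Real.log (f s⁻¹)) atTop (𝓝 f') := by
  have hlog : HasDerivAt (fun t => Real.log (f t)) f' 0 := by
    simpa [h0] using hf.log (by simp [h0])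
  have hslope := (hasDerivAt_iff_tendsto_slope.mp hlog).comp
    (tendsto_inv_atTop_nhdsGT_zero.mono_right (nhdsWithin_mono _ fun _ hx => ne_of_gt hx))
  refine hslope.congr' ?_
  filter_upwards [eventually_ne_atTop 0] with s hs
  simp [slope_def_field, h0, div_eq_mul_inv, mul_comm]

theorem stmt12 (m l : ℕ) (A : Matrix (Fin m) (Fin m) ℝ)
    (C : Matrix (Fin l) (Fin m) ℝ) (K : Matrix (Fin m) (Fin l) ℝ) :
    Tendsto (fun s : ℝ =>
        s * Real.log |((1 : Matrix (Fin l) (Fin l) ℝ) +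
            C * (s • (1 : Matrix (Fin m) (Fin m) ℝ) - A)⁻¹ * K).det|)
      atTop (nhds (C * K).trace) := by
  set f : ℝ → ℝ := fun t => (1 + t • (K * C - A)).det / (1 + t • -A).det
  have hf : HasDerivAt f (C * K).trace 0 :=
    ((hasDerivAt_det_one_add_smul (K * C - A)).fun_div (hasDerivAt_det_one_add_smul (-A))
      (by simp)).congr_deriv (by simp [trace_sub, trace_mul_comm K C])
  have hA : ∀ᶠ s : ℝ in atTop, (1 + s⁻¹ • -A).det ≠ 0 :=
    tendsto_inv_atTop_zero.eventually
      ((hasDerivAt_det_one_add_smul (-A)).continuousAt.eventually_ne (by simp))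
  refine (tendsto_mul_log_inv_atTop hf (by simp [f])).congr' ?_
  filter_upwards [eventually_ne_atTop 0, hA] with s hs hsA
  rw [Real.log_abs, det_one_add_mul_smul_one_sub_inv_mul A C K hs hsA]
end
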